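/- Let k_0 ≥ 1 be an integer, φ_0 ∈ ℝ, and t_1, …, t_{k_0} ∈ ℂ arbitrary, with t_0 = 1. Suppose that for all k > k_0, t_k = s_k·e^{iφ_0}, where either (i) s_k = s^k for a fixed real s > 0, or (ii) s_k = 2^{2k}. Assume λ(n,0) ≠ 0 for all n. Then the series Σ_{n≥1} ζ_n^a converges (hence the associated ℂSG measure is of bounded variation). -/

import Mathlib

open MeasureTheory Filter Finset

attribute [local instance] Classical.propDecidable

noncomputable section

/-- A relation on ℕ representing a naturally labelled past-finite causal set:
a strict partial order `r` with `r i j → i < j`. -/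
def CausalRel (r : ℕ → ℕ → Prop) : Prop :=
  (∀ i, ¬ r i i) ∧ (∀ i j k, r i j → r j k → r i k) ∧ (∀ i j, r i j → i < j)

/-- Ω, the sample space of naturally labelled past-finite causal sets. -/
def Omega : Type := {r : ℕ → ℕ → Prop // CausalRel r}

/-- An `n`-node: a strict partial order on `Fin n` compatible with the labelling. -/
def IsNode {n : ℕ} (p : Fin n → Fin n → Prop) : Prop :=
  (∀ i, ¬ p i i) ∧ (∀ i j k, p i j → p j k → p i k) ∧
    (∀ i j : Fin n, p i j → (i : ℕ) < (j : ℕ))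

/-- The cylinder set of an `n`-node. -/
def Cyl {n : ℕ} (p : Fin n → Fin n → Prop) : Set Omega :=
  {r | ∀ i j : Fin n, r.1 i.1 j.1 ↔ p i j}

/-- The Boolean set algebra 𝔜 generated by the cylinder sets (and Ω itself) under
finite unions, intersections and complements. -/
inductive InAlg : Set Omega → Prop
  | basic {n : ℕ} (hn : 1 ≤ n) (p : Fin n → Fin n → Prop) (hp : IsNode p) : InAlg (Cyl p)
  | univ : InAlg Set.univ
  | compl (s : Set Omega) : InAlg s → InAlg sᶜ
  | union (s t : Set Omega) : InAlg s → InAlg t → InAlg (s ∪ t)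

/-- Finite additivity of a complex set function on the algebra 𝔜. -/
def FinitelyAdditive (μ : Set Omega → ℂ) : Prop :=
  ∀ s t : Set Omega, InAlg s → InAlg t → Disjoint s t → μ (s ∪ t) = μ s + μ t

/-- A finite partition of Ω into pairwise disjoint members of 𝔜. -/
def IsPartition (π : Finset (Set Omega)) : Prop :=
  (∀ s ∈ π, InAlg s) ∧ ((↑π : Set (Set Omega)).Pairwise Disjoint) ∧
    ⋃₀ (↑π : Set (Set Omega)) = Set.univ

/-- Bounded variation: the sums Σᵢ |μ(αᵢ)| over finite partitions of Ω into members
of 𝔜 are uniformly bounded. -/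
def BoundedVariation (μ : Set Omega → ℂ) : Prop :=
  ∃ M : ℝ, ∀ π : Finset (Set Omega), IsPartition π → ∑ s ∈ π, ‖μ s‖ ≤ M

/-- λ(a,b) = Σ_{k=b}^{a} C(a−b, k−b)·t_k. -/
def lam (t : ℕ → ℂ) (a b : ℕ) : ℂ :=
  ∑ k ∈ Finset.Icc b a, ((a - b).choose (k - b) : ℂ) * t k

/-- The maximal elements of a finite subset `I` with respect to the relation `c`. -/
def maxIn {n : ℕ} (c : Fin n → Fin n → Prop) (I : Finset (Fin n)) : Finset (Fin n) :=
  I.filter fun i => ∀ j ∈ I, ¬ c i j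

/-- The past of the element `m` in the node `p`. -/
def pastOf {n : ℕ} (p : Fin n → Fin n → Prop) (m : Fin n) : Finset (Fin n) :=
  Finset.univ.filter fun i => p i m

/-- The ℂSG amplitude of (the cylinder set of) an `n`-node:
∏_{m=1}^{n−1} λ(ϖ_m, μ_m)/λ(m,0). -/
def amp (t : ℕ → ℂ) {n : ℕ} (p : Fin n → Fin n → Prop) : ℂ :=
  ∏ m ∈ Finset.univ.filter (fun m : Fin n => 1 ≤ (m : ℕ)),
    lam t (pastOf p m).card (maxIn p (pastOf p m)).card / lam t (m : ℕ) 0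

/-- μ is the ℂSG measure associated to the coupling constants t: it is finitely
additive on 𝔜 and takes the prescribed values on cylinder sets. -/
def IsCSG (t : ℕ → ℂ) (μ : Set Omega → ℂ) : Prop :=
  FinitelyAdditive μ ∧
    ∀ (n : ℕ), 1 ≤ n → ∀ p : Fin n → Fin n → Prop, IsNode p → μ (Cyl p) = amp t p

/-- `I` is an order ideal (downward-closed set) of the relation `c`. -/
def isIdeal {n : ℕ} (c : Fin n → Fin n → Prop) (I : Finset (Fin n)) : Prop :=
  ∀ j ∈ I, ∀ i, c i j → i ∈ I

/-- Q(c) := Σ_{I an order ideal of c} |λ(|I|, m(I))|. -/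
def Qval (t : ℕ → ℂ) {n : ℕ} (c : Fin n → Fin n → Prop) : ℝ :=
  ∑ I ∈ Finset.univ.filter (fun I : Finset (Fin n) => isIdeal c I),
    ‖lam t I.card (maxIn c I).card‖

/-- ζ(c) := Q(c)/|λ(n,0)| − 1. -/
def zeta (t : ℕ → ℂ) {n : ℕ} (c : Fin n → Fin n → Prop) : ℝ :=
  Qval t c / ‖lam t n 0‖ - 1

/-- ζ_n^a := (Σ_{k=0}^{n} C(n,k)·|t_k|)/|λ(n,0)| − 1. -/
def zetaA (t : ℕ → ℂ) (n : ℕ) : ℝ :=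
  (∑ k ∈ Finset.range (n + 1), (n.choose k : ℝ) * ‖t k‖) /
    ‖lam t n 0‖ - 1

/-- ζ_n^c := (|t_0| + Σ_{ϖ=1}^{n} |λ(ϖ,1)|)/|λ(n,0)| − 1. -/
def zetaC (t : ℕ → ℂ) (n : ℕ) : ℝ :=
  (‖t 0‖ + ∑ w ∈ Finset.Icc 1 n, ‖lam t w 1‖) /
    ‖lam t n 0‖ - 1

/-- S_n := Σ_{p an n-node} |μ(Cyl(p))|. -/
def Svar (μ : Set Omega → ℂ) (n : ℕ) : ℝ :=
  ∑ p : {p : Fin n → Fin n → Prop // IsNode p}, ‖μ (Cyl p.1)‖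

/-!
The couplings `t k` with `k > k₀` all point in the direction `e^{iφ₀}`, so their contributions
to `λ(n,0)` add up without cancellation to a quantity of order at least `n^{k₀+2}`, while the
first `k₀ + 1` couplings contribute `O(n^{k₀})` to both `λ(n,0)` and the numerator of `ζ_n^a`.
Hence `ζ_n^a = O(n⁻²)` and the series converges.

Every member of a partition of `Ω` in `𝔜` is a union of cylinder sets of `n`-nodes for one
common `n`, so the variation of `μ` is at most `T_n = Σ_{p an n-node} |amp p|`. An
`(n+1)`-node is an `n`-node `c` together with the order ideal `I` of `c` that forms the past of
the new element, and its amplitude is `amp c · λ(|I|, |max I|) / λ(n,0)`. Since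
`λ(|I|, |max I|) = Σ_{max I ⊆ J ⊆ I} t_{|J|}` and distinct ideals `I` give disjoint intervals
`[max I, I]`, we get `Q(c) ≤ Σ_k C(n,k) |t_k|`, that is `T_{n+1} ≤ (1 + ζ_n^a) T_n`. Therefore
`T_n ≤ exp (Σ_m ζ_m^a)` is bounded.
-/

lemma lam_eq_sum_range (t : ℕ → ℂ) {a b : ℕ} (h : b ≤ a) :
    lam t a b = ∑ j ∈ range (a - b + 1), ((a - b).choose j : ℂ) * t (b + j) := by
  rw [lam, ← Ico_add_one_right_eq_Icc, sum_Ico_eq_sum_range, Nat.sub_add_comm h]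
  simp

lemma lam_zero_eq_sum_range (t : ℕ → ℂ) (n : ℕ) :
    lam t n 0 = ∑ k ∈ range (n + 1), (n.choose k : ℂ) * t k := by
  simpa using lam_eq_sum_range t n.zero_le

lemma lam_card_eq_sum_Icc (t : ℕ → ℂ) {α : Type*} [DecidableEq α] {M I : Finset α}
    (h : M ⊆ I) : lam t #I #M = ∑ J ∈ Icc M I, t #J := by
  have hdisj : ∀ K ∈ (I \ M).powerset, Disjoint M K := fun K hK =>
    (disjoint_of_subset_left (mem_powerset.1 hK) sdiff_disjoint).symm
  have hinj : Set.InjOn (M ∪ ·) ((I \ M).powerset : Set (Finset α)) := fun K hK L hL hKL => by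
    simpa [union_sdiff_cancel_left (hdisj K hK), union_sdiff_cancel_left (hdisj L hL)] using
      congrArg (· \ M) hKL
  rw [Icc_eq_image_powerset h, sum_image hinj, sum_congr rfl fun K hK => by
    rw [card_union_of_disjoint (hdisj K hK)], sum_powerset_apply_card (fun j => t (#M + j)),
    card_sdiff_of_subset h, lam_eq_sum_range t (card_le_card h)]
  simp

lemma zetaA_nonneg (t : ℕ → ℂ) {n : ℕ} (h : lam t n 0 ≠ 0) : 0 ≤ zetaA t n := by
  rw [zetaA, sub_nonneg, one_le_div (norm_pos_iff.2 h), lam_zero_eq_sum_range]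
  exact (norm_sum_le _ _).trans_eq (by simp)

lemma one_add_zetaA (t : ℕ → ℂ) (n : ℕ) :
    1 + zetaA t n = (∑ k ∈ range (n + 1), (n.choose k : ℝ) * ‖t k‖) / ‖lam t n 0‖ := by
  rw [zetaA, add_sub_cancel]

lemma pow_div_le_choose {n r : ℕ} (h : 2 * r ≤ n) :
    (n : ℝ) ^ r / (2 ^ r * r.factorial) ≤ n.choose r := by
  have hhalf : (n : ℝ) / 2 ≤ ((n + 1 - r : ℕ) : ℝ) := by
    rw [div_le_iff₀ two_pos]
    exact_mod_cast (show n ≤ (n + 1 - r) * 2 by omega)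
  calc (n : ℝ) ^ r / (2 ^ r * r.factorial) = ((n : ℝ) / 2) ^ r / r.factorial := by
        rw [div_pow, div_div]
    _ ≤ ((n + 1 - r : ℕ) : ℝ) ^ r / r.factorial := by gcongr
    _ ≤ n.choose r := Nat.pow_le_choose r n

lemma sum_range_choose_mul_norm_le (t : ℕ → ℂ) (k0 : ℕ) {n : ℕ} (hn : 1 ≤ n) :
    ∑ k ∈ range (k0 + 1), (n.choose k : ℝ) * ‖t k‖ ≤
      (∑ k ∈ range (k0 + 1), ‖t k‖) * (n : ℝ) ^ k0 := by
  rw [sum_mul]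
  refine sum_le_sum fun k hk => ?_
  rw [mul_comm]
  gcongr
  calc (n.choose k : ℝ) ≤ (n : ℝ) ^ k := by exact_mod_cast Nat.choose_le_pow n k
    _ ≤ (n : ℝ) ^ k0 :=
        pow_le_pow_right₀ (by exact_mod_cast hn) (by simpa [Nat.lt_succ_iff] using hk)

lemma div_sub_one_le_four_mul_div {h T D : ℝ} (hh : 0 ≤ h) (hT : 2 * h ≤ T) (hT0 : 0 < T)
    (hD : T - h ≤ D) : (h + T) / D - 1 ≤ 4 * h / T := by
  have hD0 : 0 < D := by linarith
  rw [div_sub_one hD0.ne', div_le_div_iff₀ hD0 hT0]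
  nlinarith

section Colinear

variable {t : ℕ → ℂ} {k0 : ℕ} {E : ℂ}

lemma norm_sum_Ico_choose_mul (hE : ‖E‖ = 1) (hcol : ∀ k, k0 < k → t k = ‖t k‖ * E) (n : ℕ) :
    ‖∑ k ∈ Ico (k0 + 1) (n + 1), (n.choose k : ℂ) * t k‖ =
      ∑ k ∈ Ico (k0 + 1) (n + 1), (n.choose k : ℝ) * ‖t k‖ := by
  have hsum : ∑ k ∈ Ico (k0 + 1) (n + 1), (n.choose k : ℂ) * t k =
      ((∑ k ∈ Ico (k0 + 1) (n + 1), (n.choose k : ℝ) * ‖t k‖ : ℝ) : ℂ) * E := by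
    push_cast
    rw [sum_mul]
    refine sum_congr rfl fun k hk => ?_
    rw [mul_assoc, ← hcol k (by simp at hk; omega)]
  rw [hsum, norm_mul, hE, mul_one, Complex.norm_real, Real.norm_of_nonneg (by positivity)]

lemma sum_Ico_sub_sum_range_le_norm_lam (hE : ‖E‖ = 1) (hcol : ∀ k, k0 < k → t k = ‖t k‖ * E)
    {n : ℕ} (hn : k0 ≤ n) :
    ∑ k ∈ Ico (k0 + 1) (n + 1), (n.choose k : ℝ) * ‖t k‖ -
      ∑ k ∈ range (k0 + 1), (n.choose k : ℝ) * ‖t k‖ ≤ ‖lam t n 0‖ := by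
  rw [lam_zero_eq_sum_range, ← sum_range_add_sum_Ico _ (by omega : k0 + 1 ≤ n + 1),
    ← norm_sum_Ico_choose_mul hE hcol n]
  set A := ∑ k ∈ range (k0 + 1), (n.choose k : ℂ) * t k
  set B := ∑ k ∈ Ico (k0 + 1) (n + 1), (n.choose k : ℂ) * t k
  have hA : ‖A‖ ≤ ∑ k ∈ range (k0 + 1), (n.choose k : ℝ) * ‖t k‖ :=
    (norm_sum_le _ _).trans_eq (by simp)
  have hB := norm_sub_norm_le B (-A)
  rw [norm_neg, sub_neg_eq_add, add_comm] at hB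
  linarith

theorem summable_zetaA_of_colinear (hE : ‖E‖ = 1) (hcol : ∀ k, k0 < k → t k = ‖t k‖ * E)
    {r : ℕ} (hr : k0 + 2 ≤ r) (htr : t r ≠ 0) (hlam : ∀ n, lam t n 0 ≠ 0) :
    Summable (zetaA t) := by
  set C := ∑ k ∈ range (k0 + 1), ‖t k‖
  set c := ‖t r‖ / (2 ^ r * r.factorial) with hc_def
  have hc : 0 < c := by positivity
  refine Summable.of_norm_bounded_eventually_nat
    ((Real.summable_one_div_nat_pow.2 one_lt_two).mul_left (4 * C / c)) ?_
  filter_upwards [eventually_ge_atTop (max (2 * r) ⌈2 * C / c⌉₊)] with n hn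
  rw [max_le_iff] at hn
  set head := ∑ k ∈ range (k0 + 1), (n.choose k : ℝ) * ‖t k‖
  set tail := ∑ k ∈ Ico (k0 + 1) (n + 1), (n.choose k : ℝ) * ‖t k‖
  have hn1 : (1 : ℝ) ≤ n := by exact_mod_cast (by omega : 1 ≤ n)
  have hhead : head ≤ C * (n : ℝ) ^ k0 := sum_range_choose_mul_norm_le t k0 (by omega)
  have htail : c * (n : ℝ) ^ k0 * (n : ℝ) ^ 2 ≤ tail :=
    calc c * (n : ℝ) ^ k0 * (n : ℝ) ^ 2 ≤ c * (n : ℝ) ^ r := by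
          rw [mul_assoc, ← pow_add]
          gcongr
      _ = (n : ℝ) ^ r / (2 ^ r * r.factorial) * ‖t r‖ := by rw [hc_def]; ring
      _ ≤ n.choose r * ‖t r‖ := by gcongr; exact pow_div_le_choose (by omega)
      _ ≤ tail := single_le_sum (f := fun k => (n.choose k : ℝ) * ‖t k‖)
          (fun _ _ => by positivity) (by simp; omega)
  have hCn : 2 * C ≤ c * (n : ℝ) ^ 2 := by
    have := (Nat.le_ceil (2 * C / c)).trans (Nat.cast_le.2 hn.2)
    rw [div_le_iff₀ hc] at this
    nlinarith [mul_le_mul_of_nonneg_left hn1 (by positivity : 0 ≤ c * n)]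
  have hnum : zetaA t n = (head + tail) / ‖lam t n 0‖ - 1 := by
    rw [zetaA, ← sum_range_add_sum_Ico _ (by omega : k0 + 1 ≤ n + 1)]
  rw [Real.norm_of_nonneg (zetaA_nonneg t (hlam n)), hnum]
  have h2head : 2 * head ≤ tail := by
    calc 2 * head ≤ 2 * C * (n : ℝ) ^ k0 := by linarith
      _ ≤ c * (n : ℝ) ^ 2 * (n : ℝ) ^ k0 := by gcongr
      _ ≤ tail := by linarith
  have htail0 : 0 < tail := (by positivity : 0 < c * (n : ℝ) ^ k0 * (n : ℝ) ^ 2).trans_le htail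
  calc (head + tail) / ‖lam t n 0‖ - 1 ≤ 4 * head / tail :=
        div_sub_one_le_four_mul_div (by positivity) h2head htail0
          (sum_Ico_sub_sum_range_le_norm_lam hE hcol (by omega))
    _ ≤ 4 * (C * (n : ℝ) ^ k0) / (c * (n : ℝ) ^ k0 * (n : ℝ) ^ 2) := by gcongr
    _ = 4 * C / c * (1 / (n : ℝ) ^ 2) := by field_simp

end Colinear

abbrev Node (n : ℕ) := {p : Fin n → Fin n → Prop // IsNode p}

def trunc (n : ℕ) (x : Omega) : Fin n → Fin n → Prop := fun i j => x.1 i j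

lemma isNode_trunc (n : ℕ) (x : Omega) : IsNode (trunc n x) :=
  let ⟨hirr, htrans, hlt⟩ := x.2
  ⟨fun i => hirr i, fun _ _ _ => htrans _ _ _, fun _ _ => hlt _ _⟩

lemma mem_cyl_iff {n : ℕ} {p : Fin n → Fin n → Prop} {x : Omega} : x ∈ Cyl p ↔ trunc n x = p :=
  ⟨fun h => funext₂ fun i j => propext (h i j), fun h _ _ => h ▸ Iff.rfl⟩

lemma cyl_nonempty {n : ℕ} {p : Fin n → Fin n → Prop} (hp : IsNode p) : (Cyl p).Nonempty := by
  refine ⟨⟨fun i j => ∃ (hi : i < n) (hj : j < n), p ⟨i, hi⟩ ⟨j, hj⟩, ?_, ?_, ?_⟩, ?_⟩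
  · rintro i ⟨_, _, h⟩
    exact hp.1 _ h
  · rintro i j k ⟨hi, _, hij⟩ ⟨_, hk, hjk⟩
    exact ⟨hi, hk, hp.2.1 _ _ _ hij hjk⟩
  · rintro i j ⟨hi, hj, h⟩
    exact hp.2.2 _ _ h
  · exact fun i j => ⟨fun ⟨_, _, h⟩ => h, fun h => ⟨i.2, j.2, h⟩⟩

lemma disjoint_cyl {n : ℕ} {p q : Fin n → Fin n → Prop} (h : p ≠ q) : Disjoint (Cyl p) (Cyl q) :=
  Set.disjoint_left.2 fun _ hp hq => h ((mem_cyl_iff.1 hp).symm.trans (mem_cyl_iff.1 hq))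

def DeterminedUpTo (n : ℕ) (s : Set Omega) : Prop :=
  ∀ x y : Omega, trunc n x = trunc n y → (x ∈ s ↔ y ∈ s)

lemma DeterminedUpTo.mono {m n : ℕ} {s : Set Omega} (hs : DeterminedUpTo m s) (hmn : m ≤ n) :
    DeterminedUpTo n s := fun x y hxy =>
  hs x y (funext₂ fun i j => congrFun₂ hxy (i.castLE hmn) (j.castLE hmn))

lemma InAlg.eventually_determinedUpTo {s : Set Omega} (hs : InAlg s) :
    ∀ᶠ n in atTop, DeterminedUpTo n s := by
  induction hs with
  | @basic n _ p _ =>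
    refine (eventually_ge_atTop n).mono fun m hm => DeterminedUpTo.mono ?_ hm
    intro x y hxy
    rw [mem_cyl_iff, mem_cyl_iff, hxy]
  | univ => exact Eventually.of_forall fun _ _ _ _ => Iff.rfl
  | compl s _ ih => exact ih.mono fun n hn x y hxy => not_congr (hn x y hxy)
  | union s t _ _ ihs iht =>
    exact (ihs.and iht).mono fun n hn x y hxy => or_congr (hn.1 x y hxy) (hn.2 x y hxy)

lemma DeterminedUpTo.eq_biUnion_cyl {n : ℕ} {s : Set Omega} (hs : DeterminedUpTo n s) :
    s = ⋃ p ∈ univ.filter (fun p : Node n => Cyl p.1 ⊆ s), Cyl p.1 := by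
  refine Set.Subset.antisymm (fun x hx => ?_) (by simp)
  have hsub : Cyl (trunc n x) ⊆ s := fun y hy => (hs y x (mem_cyl_iff.1 hy)).2 hx
  exact Set.mem_biUnion (x := ⟨trunc n x, isNode_trunc n x⟩) (by simpa using hsub)
    (mem_cyl_iff.2 rfl)

lemma InAlg.empty : InAlg ∅ := by
  simpa using InAlg.compl _ InAlg.univ

lemma InAlg.biUnion {ι : Type*} {f : ι → Set Omega} (hf : ∀ i, InAlg (f i)) (F : Finset ι) :
    InAlg (⋃ i ∈ F, f i) := by
  induction F using Finset.cons_induction with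
  | empty => simpa using InAlg.empty
  | cons i F _ ih => simpa using InAlg.union _ _ (hf i) ih

lemma FinitelyAdditive.map_empty {μ : Set Omega → ℂ} (hμ : FinitelyAdditive μ) : μ ∅ = 0 := by
  simpa using hμ ∅ ∅ InAlg.empty InAlg.empty (disjoint_bot_left)

lemma FinitelyAdditive.map_biUnion {μ : Set Omega → ℂ} (hμ : FinitelyAdditive μ) {ι : Type*}
    {f : ι → Set Omega} (hf : ∀ i, InAlg (f i)) (hd : Pairwise fun i j => Disjoint (f i) (f j))
    (F : Finset ι) :
    μ (⋃ i ∈ F, f i) = ∑ i ∈ F, μ (f i) := by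
  induction F using Finset.induction with
  | empty => simpa using hμ.map_empty
  | insert i F hi ih =>
    rw [set_biUnion_insert, sum_insert hi, ← ih]
    refine hμ _ _ (hf i) (InAlg.biUnion hf F) (Set.disjoint_iUnion₂_right.2 fun j hj => hd ?_)
    rintro rfl
    exact hi hj

lemma IsCSG.norm_le_sum_amp {t : ℕ → ℂ} {μ : Set Omega → ℂ} (hμ : IsCSG t μ) {n : ℕ}
    (hn : 1 ≤ n) {s : Set Omega} (hs : DeterminedUpTo n s) :
    ‖μ s‖ ≤ ∑ p ∈ univ.filter (fun p : Node n => Cyl p.1 ⊆ s), ‖amp t p.1‖ := by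
  conv_lhs => rw [hs.eq_biUnion_cyl]
  rw [FinitelyAdditive.map_biUnion hμ.1 (fun p => InAlg.basic hn p.1 p.2)
    (fun p q hpq => disjoint_cyl (Subtype.coe_ne_coe.2 hpq))]
  refine (norm_sum_le _ _).trans_eq (sum_congr rfl fun p _ => ?_)
  rw [hμ.2 n hn p.1 p.2]

def sumNormAmp (t : ℕ → ℂ) (n : ℕ) : ℝ := ∑ p : Node n, ‖amp t p.1‖

lemma IsCSG.exists_sum_norm_le {t : ℕ → ℂ} {μ : Set Omega → ℂ} (hμ : IsCSG t μ)
    {π : Finset (Set Omega)} (hπ : IsPartition π) :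
    ∃ n, 1 ≤ n ∧ ∑ s ∈ π, ‖μ s‖ ≤ sumNormAmp t n := by
  obtain ⟨n, hn, hdet⟩ := ((eventually_ge_atTop 1).and
    ((eventually_all_finset π).2 fun s hs => (hπ.1 s hs).eventually_determinedUpTo)).exists
  set F : Set Omega → Finset (Node n) := fun s => univ.filter fun p => Cyl p.1 ⊆ s
  have hdisj : (π : Set (Set Omega)).PairwiseDisjoint F := by
    intro s hs s' hs' hne
    refine disjoint_left.2 fun p hp hp' => ?_
    obtain ⟨x, hx⟩ := cyl_nonempty p.2
    exact Set.disjoint_left.1 (hπ.2.1 hs hs' hne) ((mem_filter.1 hp).2 hx) ((mem_filter.1 hp').2 hx)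
  refine ⟨n, hn, ?_⟩
  calc ∑ s ∈ π, ‖μ s‖ ≤ ∑ s ∈ π, ∑ p ∈ F s, ‖amp t p.1‖ :=
        sum_le_sum fun s hs => hμ.norm_le_sum_amp hn (hdet s hs)
    _ = ∑ p ∈ π.biUnion F, ‖amp t p.1‖ := (sum_biUnion hdisj).symm
    _ ≤ sumNormAmp t n := sum_le_univ_sum_of_nonneg fun _ => norm_nonneg _

lemma maxIn_subset {n : ℕ} (c : Fin n → Fin n → Prop) (I : Finset (Fin n)) : maxIn c I ⊆ I :=
  filter_subset _ I

section Ideals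

variable {n : ℕ} {c : Fin n → Fin n → Prop}

lemma exists_mem_maxIn (hc : IsNode c) {I : Finset (Fin n)} {x : Fin n} (hx : x ∈ I) :
    ∃ y ∈ maxIn c I, y = x ∨ c x y := by
  obtain ⟨y, hy, hmax⟩ := (I.filter fun y => y = x ∨ c x y).exists_max_image (fun y => (y : ℕ))
    ⟨x, mem_filter.2 ⟨hx, Or.inl rfl⟩⟩
  rw [mem_filter] at hy
  refine ⟨y, mem_filter.2 ⟨hy.1, fun j hj hyj => ?_⟩, hy.2⟩
  have hxj : c x j := hy.2.elim (fun h => h ▸ hyj) (fun h => hc.2.1 _ _ _ h hyj)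
  exact (hc.2.2 _ _ hyj).not_ge (hmax j (mem_filter.2 ⟨hj, Or.inr hxj⟩))

lemma mem_iff_of_maxIn_subset (hc : IsNode c) {I J : Finset (Fin n)} (hI : isIdeal c I)
    (hMJ : maxIn c I ⊆ J) (hJI : J ⊆ I) (x : Fin n) : x ∈ I ↔ x ∈ J ∨ ∃ j ∈ J, c x j := by
  refine ⟨fun hx => ?_, ?_⟩
  · obtain ⟨y, hy, rfl | hxy⟩ := exists_mem_maxIn hc hx
    exacts [Or.inl (hMJ hy), Or.inr ⟨y, hMJ hy, hxy⟩]
  · rintro (hx | ⟨j, hj, hxj⟩)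
    exacts [hJI hx, hI j (hJI hj) x hxj]

lemma eq_of_mem_Icc_maxIn (hc : IsNode c) {I I' J : Finset (Fin n)} (hI : isIdeal c I)
    (hI' : isIdeal c I') (hJ : J ∈ Icc (maxIn c I) I) (hJ' : J ∈ Icc (maxIn c I') I') :
    I = I' := by
  rw [mem_Icc] at hJ hJ'
  ext x
  rw [mem_iff_of_maxIn_subset hc hI hJ.1 hJ.2, mem_iff_of_maxIn_subset hc hI' hJ'.1 hJ'.2]

theorem Qval_le (t : ℕ → ℂ) (hc : IsNode c) :
    Qval t c ≤ ∑ k ∈ range (n + 1), (n.choose k : ℝ) * ‖t k‖ := by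
  set ideals := univ.filter fun I : Finset (Fin n) => isIdeal c I
  have hdisj : (ideals : Set (Finset (Fin n))).PairwiseDisjoint fun I => Icc (maxIn c I) I :=
    fun I hI I' hI' hne => disjoint_left.2 fun J hJ hJ' =>
      hne (eq_of_mem_Icc_maxIn hc (mem_filter.1 hI).2 (mem_filter.1 hI').2 hJ hJ')
  calc Qval t c = ∑ I ∈ ideals, ‖∑ J ∈ Icc (maxIn c I) I, t #J‖ :=
        sum_congr rfl fun I _ => by rw [lam_card_eq_sum_Icc t (maxIn_subset c I)]
    _ ≤ ∑ I ∈ ideals, ∑ J ∈ Icc (maxIn c I) I, ‖t #J‖ := sum_le_sum fun _ _ => norm_sum_le _ _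
    _ = ∑ J ∈ ideals.biUnion fun I => Icc (maxIn c I) I, ‖t #J‖ := (sum_biUnion hdisj).symm
    _ ≤ ∑ J : Finset (Fin n), ‖t #J‖ := sum_le_univ_sum_of_nonneg fun _ => norm_nonneg _
    _ = ∑ k ∈ range (n + 1), (n.choose k : ℝ) * ‖t k‖ := by
        rw [← powerset_univ]
        exact (sum_powerset_apply_card fun k => ‖t k‖).trans (by simp)

end Ideals

section Extension

variable {n : ℕ}

def extendNode (c : Fin n → Fin n → Prop) (I : Finset (Fin n)) :
    Fin (n + 1) → Fin (n + 1) → Prop :=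
  Fin.lastCases (fun _ => False) fun i => Fin.lastCases (i ∈ I) (c i)

def restrictNode (p : Fin (n + 1) → Fin (n + 1) → Prop) : Fin n → Fin n → Prop :=
  fun i j => p i.castSucc j.castSucc

def pastOfLast (p : Fin (n + 1) → Fin (n + 1) → Prop) : Finset (Fin n) :=
  univ.filter fun i => p i.castSucc (Fin.last n)

variable (c : Fin n → Fin n → Prop) (I : Finset (Fin n))

@[simp] lemma extendNode_castSucc_castSucc (i j : Fin n) :
    extendNode c I i.castSucc j.castSucc = c i j := by simp [extendNode]

@[simp] lemma extendNode_castSucc_last (i : Fin n) :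
    extendNode c I i.castSucc (Fin.last n) = (i ∈ I) := by
  simp [extendNode]

@[simp] lemma extendNode_last (j : Fin (n + 1)) : extendNode c I (Fin.last n) j = False := by
  simp [extendNode]

lemma isNode_extendNode {c : Fin n → Fin n → Prop} {I : Finset (Fin n)} (hc : IsNode c)
    (hI : isIdeal c I) : IsNode (extendNode c I) := by
  refine ⟨fun i => ?_, fun i j k => ?_, fun i j => ?_⟩
  · induction i using Fin.lastCases <;> simp [hc.1]
  · induction i using Fin.lastCases <;> induction j using Fin.lastCases <;>
      induction k using Fin.lastCases <;> simp
    exacts [fun hij hj => hI _ hj _ hij, hc.2.1 _ _ _]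
  · induction i using Fin.lastCases <;> induction j using Fin.lastCases <;> simp
    exact hc.2.2 _ _

lemma restrictNode_extendNode : restrictNode (extendNode c I) = c := by
  ext i j
  simp [restrictNode]

lemma pastOfLast_extendNode : pastOfLast (extendNode c I) = I := by
  ext i
  simp [pastOfLast]

lemma extendNode_restrictNode {p : Fin (n + 1) → Fin (n + 1) → Prop} (hp : IsNode p) :
    extendNode (restrictNode p) (pastOfLast p) = p := by
  ext i j
  induction i using Fin.lastCases <;> induction j using Fin.lastCases <;>
    simp [restrictNode, pastOfLast]
  all_goals exact fun h => (hp.2.2 _ _ h).not_ge (Fin.le_last _)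

lemma isNode_restrictNode {p : Fin (n + 1) → Fin (n + 1) → Prop} (hp : IsNode p) :
    IsNode (restrictNode p) :=
  ⟨fun _ => hp.1 _, fun _ _ _ => hp.2.1 _ _ _, fun _ _ h => by simpa using hp.2.2 _ _ h⟩

lemma isIdeal_pastOfLast {p : Fin (n + 1) → Fin (n + 1) → Prop} (hp : IsNode p) :
    isIdeal (restrictNode p) (pastOfLast p) := by
  intro j hj i hij
  simp only [pastOfLast, mem_filter, mem_univ, true_and] at hj ⊢
  exact hp.2.1 _ _ _ hij hj

def extendEquiv (n : ℕ) :
    (Σ c : Node n, {I : Finset (Fin n) // isIdeal c.1 I}) ≃ Node (n + 1) where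
  toFun x := ⟨extendNode x.1.1 x.2.1, isNode_extendNode x.1.2 x.2.2⟩
  invFun p :=
    ⟨⟨restrictNode p.1, isNode_restrictNode p.2⟩, ⟨pastOfLast p.1, isIdeal_pastOfLast p.2⟩⟩
  left_inv _ :=
    Sigma.subtype_ext (Subtype.ext (restrictNode_extendNode _ _)) (pastOfLast_extendNode _ _)
  right_inv p := Subtype.ext (extendNode_restrictNode p.2)

lemma pastOf_extendNode_castSucc (m : Fin n) :
    pastOf (extendNode c I) m.castSucc = (pastOf c m).map Fin.castSuccEmb := by
  ext i
  induction i using Fin.lastCases <;> simp [pastOf]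

lemma pastOf_extendNode_last : pastOf (extendNode c I) (Fin.last n) = I.map Fin.castSuccEmb := by
  ext i
  induction i using Fin.lastCases <;> simp [pastOf]

lemma maxIn_extendNode_map (J : Finset (Fin n)) :
    maxIn (extendNode c I) (J.map Fin.castSuccEmb) = (maxIn c J).map Fin.castSuccEmb := by
  ext i
  induction i using Fin.lastCases <;> simp [maxIn]

lemma amp_extendNode (t : ℕ → ℂ) (hn : 1 ≤ n) :
    amp t (extendNode c I) = amp t c * (lam t #I #(maxIn c I) / lam t n 0) := by
  rw [amp, amp, prod_filter, prod_filter, Fin.prod_univ_castSucc, if_pos (by simpa using hn)]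
  simp [pastOf_extendNode_castSucc, pastOf_extendNode_last, maxIn_extendNode_map]

end Extension

lemma sumNormAmp_succ (t : ℕ → ℂ) {n : ℕ} (hn : 1 ≤ n) :
    sumNormAmp t (n + 1) = ∑ c : Node n, ‖amp t c.1‖ * (Qval t c.1 / ‖lam t n 0‖) := by
  rw [sumNormAmp, ← (extendEquiv n).sum_comp, Fintype.sum_sigma]
  refine sum_congr rfl fun c _ => ?_
  simp only [extendEquiv, Equiv.coe_fn_mk, amp_extendNode _ _ t hn, norm_mul, norm_div, ← mul_sum,
    ← sum_div, Qval]
  rw [sum_subtype (p := fun I => isIdeal c.1 I) _ fun I => by simp]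

lemma sumNormAmp_succ_le (t : ℕ → ℂ) {n : ℕ} (hn : 1 ≤ n) :
    sumNormAmp t (n + 1) ≤ (1 + zetaA t n) * sumNormAmp t n := by
  rw [sumNormAmp_succ t hn, sumNormAmp, mul_sum, one_add_zetaA]
  refine sum_le_sum fun c _ => ?_
  rw [mul_comm]
  gcongr
  exact Qval_le t c.2

lemma sumNormAmp_nonneg (t : ℕ → ℂ) (n : ℕ) : 0 ≤ sumNormAmp t n :=
  sum_nonneg fun _ _ => norm_nonneg _

instance : Subsingleton (Node 1) :=
  ⟨fun p q => Subtype.ext <| funext₂ fun i j => by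
    have hij : ¬ (i : ℕ) < j := by omega
    exact propext ⟨fun h => (hij (p.2.2.2 _ _ h)).elim, fun h => (hij (q.2.2.2 _ _ h)).elim⟩⟩

lemma sumNormAmp_one (t : ℕ → ℂ) : sumNormAmp t 1 = 1 := by
  have hempty : IsNode (fun _ _ : Fin 1 => False) :=
    ⟨fun _ => id, fun _ _ _ h => h.elim, fun _ _ h => h.elim⟩
  rw [sumNormAmp, Fintype.sum_subsingleton _ ⟨_, hempty⟩]
  simp [amp]

lemma sumNormAmp_le_exp (t : ℕ → ℂ) {n : ℕ} (hn : 1 ≤ n) :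
    sumNormAmp t n ≤ Real.exp (∑ m ∈ Ico 1 n, zetaA t m) := by
  induction n, hn using Nat.le_induction with
  | base => simp [sumNormAmp_one]
  | succ n hn ih =>
    calc sumNormAmp t (n + 1) ≤ (1 + zetaA t n) * sumNormAmp t n := sumNormAmp_succ_le t hn
      _ ≤ Real.exp (zetaA t n) * Real.exp (∑ m ∈ Ico 1 n, zetaA t m) := by
          refine mul_le_mul ?_ ih (sumNormAmp_nonneg t n) (Real.exp_pos _).le
          linarith [Real.add_one_le_exp (zetaA t n)]
      _ = Real.exp (∑ m ∈ Ico 1 (n + 1), zetaA t m) := by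
          rw [← Real.exp_add, sum_Ico_succ_top hn, add_comm]

theorem statement_14_general (k0 : ℕ) (φ0 : ℝ)
    (t : ℕ → ℂ)
    (hcol : (∃ s : ℝ, 0 < s ∧ ∀ k : ℕ, k0 < k →
        t k = ((s ^ k : ℝ) : ℂ) * Complex.exp (Complex.I * (φ0 : ℂ))) ∨
      (∀ k : ℕ, k0 < k →
        t k = (((2 : ℝ) ^ (2 * k) : ℝ) : ℂ) * Complex.exp (Complex.I * (φ0 : ℂ))))
    (hlam : ∀ n : ℕ, lam t n 0 ≠ 0) :
    (∃ L : ℝ, Filter.Tendsto (fun N => ∑ n ∈ Finset.Ico 1 N, zetaA t n)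
        Filter.atTop (nhds L)) ∧
    (∀ μ : Set Omega → ℂ, IsCSG t μ → BoundedVariation μ) := by
  set E := Complex.exp (Complex.I * (φ0 : ℂ))
  have hE : ‖E‖ = 1 := Complex.norm_exp_I_mul_ofReal φ0
  obtain ⟨S, hS⟩ : ∃ S : ℕ → ℝ, ∀ k, k0 < k → 0 < S k ∧ t k = S k * E := by
    rcases hcol with ⟨s, hs, h⟩ | h
    exacts [⟨(s ^ ·), fun k hk => ⟨by positivity, h k hk⟩⟩,
      ⟨fun k => 2 ^ (2 * k), fun k hk => ⟨by positivity, h k hk⟩⟩]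
  have hnorm : ∀ k, k0 < k → ‖t k‖ = S k := fun k hk => by
    rw [(hS k hk).2, norm_mul, hE, mul_one, Complex.norm_real, Real.norm_of_nonneg (hS k hk).1.le]
  have hsum : Summable (zetaA t) := summable_zetaA_of_colinear hE
    (fun k hk => by rw [hnorm k hk, (hS k hk).2]) (le_refl (k0 + 2))
    (by rw [← norm_ne_zero_iff, hnorm _ (by omega)]; exact (hS _ (by omega)).1.ne') hlam
  refine ⟨⟨_, (hsum.hasSum.tendsto_sum_nat.sub_const (zetaA t 0)).congr' ?_⟩, fun μ hμ => ?_⟩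
  · filter_upwards [eventually_ge_atTop 1] with N hN
    rw [sum_Ico_eq_sub _ hN, sum_range_one]
  refine ⟨Real.exp (∑' n, zetaA t n), fun π hπ => ?_⟩
  obtain ⟨n, hn, hπn⟩ := hμ.exists_sum_norm_le hπ
  calc ∑ s ∈ π, ‖μ s‖ ≤ sumNormAmp t n := hπn
    _ ≤ Real.exp (∑ m ∈ Ico 1 n, zetaA t m) := sumNormAmp_le_exp t hn
    _ ≤ Real.exp (∑' n, zetaA t n) :=
        Real.exp_le_exp.2 (hsum.sum_le_tsum _ fun m _ => zetaA_nonneg t (hlam m))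

/-- countably many couplings which are eventually colinear,
t_k = s_k·e^{iφ₀} for k > k₀ with s_k = s^k (s > 0) or s_k = 2^{2k}: Σ_{n≥1} ζ_n^a
converges, hence the associated ℂSG measure is of bounded variation. -/
theorem statement_14 (k0 : ℕ) (hk0 : 1 ≤ k0) (φ0 : ℝ)
    (t : ℕ → ℂ) (ht0 : t 0 = 1)
    (hcol : (∃ s : ℝ, 0 < s ∧ ∀ k : ℕ, k0 < k →
        t k = ((s ^ k : ℝ) : ℂ) * Complex.exp (Complex.I * (φ0 : ℂ))) ∨
      (∀ k : ℕ, k0 < k →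
        t k = (((2 : ℝ) ^ (2 * k) : ℝ) : ℂ) * Complex.exp (Complex.I * (φ0 : ℂ))))
    (hlam : ∀ n : ℕ, lam t n 0 ≠ 0) :
    (∃ L : ℝ, Filter.Tendsto (fun N => ∑ n ∈ Finset.Ico 1 N, zetaA t n)
        Filter.atTop (nhds L)) ∧
    (∀ μ : Set Omega → ℂ, IsCSG t μ → BoundedVariation μ) :=
  statement_14_general k0 φ0 t hcol hlam

end
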